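/- arXiv:2306.16938 — 4 statements merged into one kernel-verified Lean document; each statement's English description precedes it below -/
import Mathlib

section
/- An affine map A(X) = W·X + C on R^N is translation-equivariant (A(T^M(X)) = T^M(A(X)) for all M ∈ Z^d) if and only if W is a circular filter and C is a constant vector (all components equal). -/
open Finset

/-- Translation `T^M` acting on the vectorized tensor space (vectors indexed by
the grid `∏ i, ZMod (n i)`, which corresponds to `ℝ^N` via the index bijection
`δ`): `T^M(X)[I] = X[I - M]`. -/
def Tr {d : ℕ} {n : Fin d → ℕ} (M : ∀ i, ZMod (n i))
    (x : (∀ i, ZMod (n i)) → ℝ) : (∀ i, ZMod (n i)) → ℝ :=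
  fun I => x (I - M)

/-- Corollary 3.7: the affine map `A(X) = W·X + C` on `ℝ^N` (rows of `W`
indexed like `X`) is translation-equivariant iff `W` is a circular filter
(`W_{δ(M)} = T^M(W_0)` for all `M`) and `C` is a constant vector. -/
theorem affine_equivariant_iff_circular {d : ℕ} {n : Fin d → ℕ} [∀ i, NeZero (n i)]
    (W : (∀ i, ZMod (n i)) → (∀ i, ZMod (n i)) → ℝ)
    (C : (∀ i, ZMod (n i)) → ℝ) :
    (∀ (M : ∀ i, ZMod (n i)) (X : (∀ i, ZMod (n i)) → ℝ),
        (fun I => ∑ J, W I J * Tr M X J + C I) =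
          Tr M (fun I => ∑ J, W I J * X J + C I)) ↔
      (∀ M : ∀ i, ZMod (n i), W M = Tr M (W 0)) ∧ (∃ r : ℝ, ∀ I, C I = r) := by
  constructor
  · intro h
    have hC : ∀ I, C I = C 0 := by
      intro I
      have := congrFun (h I (fun _ => 0)) I
      simpa [Tr] using this
    refine ⟨?_, C 0, hC⟩
    intro M
    funext J
    have := congrFun (h M (fun K => if K = J - M then 1 else 0)) M
    simp only [Tr, sub_self, mul_ite, mul_one, mul_zero, sub_left_inj] at this
    rw [hC M, hC 0] at this
    have h1 : ∑ K, (if K = J then W M K else 0) = W M J := by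
      rw [Finset.sum_ite_eq' Finset.univ J (W M)]
      simp
    have h2 : ∑ K, (if K = J - M then W 0 K else 0) = W 0 (J - M) := by
      rw [Finset.sum_ite_eq' Finset.univ (J - M) (W 0)]
      simp
    rw [h1, h2] at this
    simpa [Tr] using this
  · rintro ⟨hW, r, hC⟩
    intro M X
    funext I
    have hW' : ∀ I J, W I J = W 0 (J - I) := fun I J => by rw [hW I]; rfl
    simp only [Tr, hC]
    congr 1
    calc ∑ J, W I J * X (J - M)
        = ∑ J, W I (J + M) * X J := by
          rw [← Equiv.sum_comp (Equiv.addRight M) (fun J => W I J * X (J - M))]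
          simp
      _ = ∑ J, W (I - M) J * X J := by
          refine Finset.sum_congr rfl fun J _ => ?_
          rw [hW' I, hW' (I - M)]
          congr 1
          abel
end

section
/- For every integer x ∈ [0, 2^{Q+1}) with binary expansion x = x_0 + 2x_1 + ... + 2^Q x_Q (each x_q ∈ {0,1}), the recursion x_q = σ(1 − σ(2^q + 2^{q+1}x_{q+1} + ... + 2^Q x_Q − x)) holds for q = Q, Q−1, ..., 0, where σ(t) = max(t, 0) is the ReLU function. -/
open Finset

/-- The ReLU function `σ(t) = max(t, 0)`. -/
def relu (t : ℝ) : ℝ := max t 0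

lemma sum_filter_lt_pow (Q : ℕ) (q : Fin (Q + 1)) :
    ∑ p ∈ univ.filter (fun p : Fin (Q + 1) => p < q), (2:ℝ) ^ (p : ℕ)
      = 2 ^ (q : ℕ) - 1 := by
  have h1 : ∑ p ∈ univ.filter (fun p : Fin (Q + 1) => p < q), (2:ℝ) ^ (p : ℕ)
      = ∑ i ∈ Finset.range (q : ℕ), (2:ℝ) ^ i := by
    refine Finset.sum_nbij' (fun p => (p : ℕ)) (fun i => (⟨min i Q, by omega⟩ : Fin (Q + 1)))
      ?_ ?_ ?_ ?_ ?_
    · intro p hp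
      simp only [mem_filter, mem_univ, true_and, Fin.lt_def] at hp
      simpa using hp
    · intro i hi
      simp only [mem_range] at hi
      have hq : (q : ℕ) ≤ Q := by omega
      simp only [mem_filter, mem_univ, true_and, Fin.lt_def]
      simpa using by omega
    · intro p hp
      simp only [mem_filter, mem_univ, true_and, Fin.lt_def] at hp
      have : (p : ℕ) ≤ Q := by omega
      simp [Fin.ext_iff, Nat.min_eq_left this]
    · intro i hi
      simp only [mem_range] at hi
      have hq : (q : ℕ) ≤ Q := by omega
      simp [Nat.min_eq_left (by omega : i ≤ Q)]
    · intro p hp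
      rfl
  rw [h1, geom_sum_eq (by norm_num : (2:ℝ) ≠ 1)]
  norm_num

/-- For `x = x_0 + 2x_1 + ⋯ + 2^Q x_Q` with binary digits `x_q ∈ {0,1}`
(so `x ∈ [0, 2^{Q+1})`), each digit satisfies the ReLU recursion
`x_q = σ(1 − σ(2^q + 2^{q+1}x_{q+1} + ⋯ + 2^Q x_Q − x))`. -/
theorem digit_relu_recursion (Q : ℕ) (b : Fin (Q + 1) → ℝ)
    (hb : ∀ q, b q = 0 ∨ b q = 1) (q : Fin (Q + 1)) :
    b q = relu (1 - relu ((2 ^ (q : ℕ) +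
        ∑ p ∈ univ.filter (fun p : Fin (Q + 1) => q < p), 2 ^ (p : ℕ) * b p) -
      ∑ p : Fin (Q + 1), 2 ^ (p : ℕ) * b p)) := by
  have hsplit : ∑ p : Fin (Q + 1), (2:ℝ) ^ (p : ℕ) * b p
      = ∑ p ∈ univ.filter (fun p : Fin (Q + 1) => q < p), 2 ^ (p : ℕ) * b p
        + (∑ p ∈ univ.filter (fun p : Fin (Q + 1) => p < q), 2 ^ (p : ℕ) * b p
           + 2 ^ (q : ℕ) * b q) := by
    rw [← Finset.sum_filter_add_sum_filter_not univ (fun p : Fin (Q + 1) => q < p)]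
    congr 1
    have hset : univ.filter (fun p : Fin (Q + 1) => ¬ q < p)
        = insert q (univ.filter (fun p : Fin (Q + 1) => p < q)) := by
      ext p
      simp only [mem_filter, mem_univ, true_and, mem_insert, not_lt]
      constructor
      · intro hpq
        rcases lt_or_eq_of_le hpq with h | h
        · exact Or.inr h
        · exact Or.inl (Fin.ext (by simpa [Fin.ext_iff] using h))
      · rintro (rfl | h)
        · exact le_refl _
        · exact h.le
    rw [hset, Finset.sum_insert (by simp)]
    ring
  have hA0 : 0 ≤ ∑ p ∈ univ.filter (fun p : Fin (Q + 1) => p < q), (2:ℝ) ^ (p : ℕ) * b p := by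
    apply Finset.sum_nonneg
    intro p _
    rcases hb p with h | h <;> rw [h] <;> positivity
  have hA1 : ∑ p ∈ univ.filter (fun p : Fin (Q + 1) => p < q), (2:ℝ) ^ (p : ℕ) * b p
      ≤ 2 ^ (q : ℕ) - 1 := by
    rw [← sum_filter_lt_pow Q q]
    apply Finset.sum_le_sum
    intro p _
    rcases hb p with h | h <;> rw [h]
    · simp only [mul_zero]; positivity
    · simp
  set T := ∑ p ∈ univ.filter (fun p : Fin (Q + 1) => q < p), (2:ℝ) ^ (p : ℕ) * b p with hT
  set A := ∑ p ∈ univ.filter (fun p : Fin (Q + 1) => p < q), (2:ℝ) ^ (p : ℕ) * b p with hA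
  rw [hsplit]
  rcases hb q with h | h <;> rw [h]
  · have e1 : (2:ℝ) ^ (q : ℕ) + T - (T + (A + 2 ^ (q : ℕ) * 0)) = 2 ^ (q : ℕ) - A := by ring
    rw [e1]
    unfold relu
    rw [max_eq_left (show (0:ℝ) ≤ 2 ^ (q:ℕ) - A by linarith),
      max_eq_right (show (1:ℝ) - (2 ^ (q:ℕ) - A) ≤ 0 by linarith)]
  · have e2 : (2:ℝ) ^ (q : ℕ) + T - (T + (A + 2 ^ (q : ℕ) * 1)) = -A := by ring
    rw [e2]
    unfold relu
    rw [max_eq_right (show -A ≤ (0:ℝ) by linarith)]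
    norm_num
end

section
/- There exists a feedforward ReLU network f : R → R^{Q+1} of depth 2Q+2 and width at most Q+1 such that for every integer x ∈ [0, 2^{Q+1}), f(x) equals the vector of binary digits (x_0, x_1, ..., x_Q) of x. -/
open Finset

/-- Evaluation of a feedforward ReLU network of uniform width `w` with `L`
layers: each layer is `z ↦ σ(W_l z + b_l)` with `σ` the componentwise ReLU.
(A network of width at most `w` embeds into such a network by padding with
zero rows, since `σ(0) = 0`.) -/
noncomputable def netEval {w : ℕ} :
    (L : ℕ) → (ℕ → Matrix (Fin w) (Fin w) ℝ) → (ℕ → Fin w → ℝ) →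
      (Fin w → ℝ) → (Fin w → ℝ)
  | 0, _, _, z => z
  | L + 1, W, b, z => fun i => relu ((W L).mulVec (netEval L W b z) i + b L i)

/-!
The bits are peeled off from the top. With `r = x mod 2^(m+1)` held in coordinate `0`, the probe
`p = σ(r - 2^m + 1)` vanishes when bit `m` of `x` is clear and is at least `1` when it is set, so
`σ(1 - p) = 1 - x_m`. One further layer reads off `x_m = σ(1 - (1 - x_m))`, the next remainder
`x mod 2^m = σ(r + 2^m (1 - x_m) - 2^m)` and, from the same two inputs, the next probe. Coordinate
`m` holds the probe and then the bit, so width `Q + 1` suffices; each of the bits `Q, …, 1` costs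
two layers, one layer computes the first probe, and an identity layer fills the depth `2Q + 2` (the
last remainder `x mod 2` is `x_0`).
-/

noncomputable section

namespace BinaryNet

open Matrix

lemma relu_of_nonneg {t : ℝ} (h : 0 ≤ t) : relu t = t := max_eq_left h

lemma relu_of_nonpos {t : ℝ} (h : t ≤ 0) : relu t = 0 := max_eq_right h

lemma relu_nonneg (t : ℝ) : 0 ≤ relu t := le_max_right t 0

lemma relu_eq_of_eq {s t : ℝ} (h : s = t) (ht : 0 ≤ t) : relu s = t := by
  rw [h]; exact relu_of_nonneg ht

abbrev Layer (n : ℕ) := Matrix (Fin n) (Fin n) ℝ × (Fin n → ℝ)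

def Layer.apply {n : ℕ} (A : Layer n) (v : Fin n → ℝ) : Fin n → ℝ :=
  fun i => relu ((A.1 *ᵥ v) i + A.2 i)

lemma netEval_succ_eq_apply {n : ℕ} (net : ℕ → Layer n) (L : ℕ) (z : Fin n → ℝ) :
    netEval (L + 1) (fun ℓ => (net ℓ).1) (fun ℓ => (net ℓ).2) z =
      (net L).apply (netEval L (fun ℓ => (net ℓ).1) (fun ℓ => (net ℓ).2) z) :=
  rfl

lemma Layer.apply_one_zero {n : ℕ} {v : Fin n → ℝ} (hv : 0 ≤ v) :
    Layer.apply (1, 0) v = v := by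
  funext i
  simp [Layer.apply, relu_of_nonneg (hv i)]

def readMatrix {n : ℕ} (p : Fin (n + 1)) (α β γ : Fin (n + 1) → ℝ) :
    Matrix (Fin (n + 1)) (Fin (n + 1)) ℝ :=
  Matrix.of fun i => Pi.single 0 (α i) + Pi.single p (β i) + Pi.single i (γ i)

lemma readMatrix_mulVec {n : ℕ} (p : Fin (n + 1)) (α β γ v : Fin (n + 1) → ℝ)
    (i : Fin (n + 1)) :
    (readMatrix p α β γ *ᵥ v) i = α i * v 0 + β i * v p + γ i * v i := by
  change (Pi.single 0 (α i) + Pi.single p (β i) + Pi.single i (γ i)) ⬝ᵥ v = _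
  simp only [add_dotProduct, single_dotProduct]

def bit (x i : ℕ) : ℝ := if x.testBit i then 1 else 0

lemma bit_nonneg (x i : ℕ) : 0 ≤ bit x i := by
  unfold bit; split_ifs <;> norm_num

lemma cast_mod_two_pow_succ (x m : ℕ) :
    ((x % 2 ^ (m + 1) : ℕ) : ℝ) = (x % 2 ^ m : ℕ) + 2 ^ m * bit x m := by
  rw [Nat.mod_pow_succ, ← Nat.toNat_testBit, bit]
  cases x.testBit m <;> simp

lemma cast_mod_two_pow_add_one_le (x m : ℕ) : ((x % 2 ^ m : ℕ) : ℝ) + 1 ≤ 2 ^ m := by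
  exact_mod_cast Nat.mod_lt x (Nat.two_pow_pos m)

/-- Positive exactly when bit `m` of `x` is set: then it is at least `1`. -/
def bitProbe (x m : ℕ) : ℝ := relu ((x % 2 ^ (m + 1) : ℕ) - 2 ^ m + 1)

lemma bitProbe_nonneg (x m : ℕ) : 0 ≤ bitProbe x m := relu_nonneg _

lemma relu_one_sub_bitProbe (x m : ℕ) : relu (1 - bitProbe x m) = 1 - bit x m := by
  set r : ℝ := ((x % 2 ^ m : ℕ) : ℝ)
  have hr_lt : r + 1 ≤ 2 ^ m := cast_mod_two_pow_add_one_le x m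
  have hr_nonneg : 0 ≤ r := Nat.cast_nonneg _
  rw [bitProbe, cast_mod_two_pow_succ, bit]
  split_ifs
  · have hprobe : relu (r + 2 ^ m * 1 - 2 ^ m + 1) = r + 1 := relu_eq_of_eq (by ring) (by linarith)
    rw [hprobe, relu_of_nonpos (by linarith), sub_self]
  · have hprobe : relu (r + 2 ^ m * 0 - 2 ^ m + 1) = 0 := relu_of_nonpos (by linarith)
    rw [hprobe, sub_zero, relu_of_nonneg zero_le_one]

lemma bitProbe_zero (x : ℕ) : bitProbe x 0 = bit x 0 := by
  rw [bitProbe, zero_add, pow_zero, sub_add_cancel, relu_of_nonneg (Nat.cast_nonneg _),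
    cast_mod_two_pow_succ]
  simp [Nat.mod_one]

def stage (Q x m : ℕ) (s : ℝ) : Fin (Q + 1) → ℝ := fun i =>
  if m < i then bit x i
  else if (i : ℕ) = m then s
  else if (i : ℕ) = 0 then (x % 2 ^ (m + 1) : ℕ)
  else 0

lemma stage_nonneg {Q x m : ℕ} {s : ℝ} (hs : 0 ≤ s) : 0 ≤ stage Q x m s := by
  intro i
  simp only [stage, Pi.zero_apply]
  split_ifs <;> first | exact bit_nonneg _ _ | exact hs | positivity

lemma stage_zero_bitProbe (Q x : ℕ) :
    stage Q x 0 (bitProbe x 0) = fun i : Fin (Q + 1) => bit x i := by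
  funext i
  rw [stage, bitProbe_zero]
  split_ifs with h h'
  · rfl
  · rw [h']
  · omega

def initLayer (Q : ℕ) : Layer (Q + 1) :=
  (readMatrix 0 (fun i => if (i : ℕ) = 0 ∨ (i : ℕ) = Q then 1 else 0) 0 0,
    fun i => if (i : ℕ) = Q then 1 - 2 ^ Q else 0)

def flipLayer (Q m : ℕ) : Layer (Q + 1) :=
  (readMatrix 0 0 0 (fun i => if (i : ℕ) = m then -1 else 1),
    fun i => if (i : ℕ) = m then 1 else 0)

def shiftLayer (Q m : ℕ) : Layer (Q + 1) :=
  (readMatrix (Fin.ofNat (Q + 1) (m + 1))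
      (fun i => if (i : ℕ) = m ∨ (i : ℕ) = 0 then 1 else 0)
      (fun i => if (i : ℕ) = m + 1 then -1
        else if (i : ℕ) = m ∨ (i : ℕ) = 0 then 2 ^ (m + 1) else 0)
      (fun i => if m + 1 < (i : ℕ) then 1 else 0),
    fun i => if (i : ℕ) = m + 1 then 1
      else if (i : ℕ) = m then 1 - 2 ^ (m + 1) - 2 ^ m
      else if (i : ℕ) = 0 then -2 ^ (m + 1)
      else 0)

lemma initLayer_apply {Q x : ℕ} (hx : x < 2 ^ (Q + 1)) :
    (initLayer Q).apply (fun j => if j = 0 then (x : ℝ) else 0) = stage Q x Q (bitProbe x Q) := by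
  funext i
  simp only [Layer.apply, initLayer, readMatrix_mulVec, stage, bitProbe, Nat.mod_eq_of_lt hx,
    Pi.zero_apply]
  split_ifs <;> simp only [zero_mul, one_mul, zero_add, add_zero] <;>
    first
    | omega
    | (congr 1; ring1)
    | exact relu_eq_of_eq rfl (by positivity)

lemma flipLayer_apply (Q x m : ℕ) (s : ℝ) :
    (flipLayer Q m).apply (stage Q x m s) = stage Q x m (relu (1 - s)) := by
  funext i
  simp only [Layer.apply, flipLayer, readMatrix_mulVec, Pi.zero_apply, zero_mul, zero_add]
  simp only [stage]
  split_ifs <;> simp only [one_mul, neg_one_mul, add_zero] <;>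
    first
    | omega
    | (congr 1; ring1)
    | exact relu_eq_of_eq rfl (by positivity)
    | exact relu_eq_of_eq rfl (bit_nonneg _ _)

lemma shiftLayer_apply {Q x m : ℕ} (hm : m + 1 ≤ Q) :
    (shiftLayer Q m).apply (stage Q x (m + 1) (1 - bit x (m + 1))) =
      stage Q x m (bitProbe x m) := by
  have hp : ((Fin.ofNat (Q + 1) (m + 1) : Fin (Q + 1)) : ℕ) = m + 1 :=
    Nat.mod_eq_of_lt (by omega)
  have hv0 : stage Q x (m + 1) (1 - bit x (m + 1)) 0 =
      (x % 2 ^ (m + 1) : ℕ) + 2 ^ (m + 1) * bit x (m + 1) := by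
    simp [stage, cast_mod_two_pow_succ x (m + 1)]
  have hvp : stage Q x (m + 1) (1 - bit x (m + 1)) (Fin.ofNat (Q + 1) (m + 1)) =
      1 - bit x (m + 1) := by
    simp only [stage, hp, lt_irrefl, if_false, if_true]
  funext i
  simp only [Layer.apply, shiftLayer, readMatrix_mulVec, hv0, hvp, bitProbe]
  simp only [stage]
  split_ifs <;> simp only [zero_mul, one_mul, neg_one_mul, zero_add, add_zero] <;>
    first
    | omega
    | (congr 1; ring1)
    | exact relu_eq_of_eq (by ring) (by positivity)
    | (rw [show (i : ℕ) = m + 1 by omega]; exact relu_eq_of_eq (by ring) (bit_nonneg _ _))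
    | exact relu_eq_of_eq (by ring) (bit_nonneg _ _)

def bitLayer (Q ℓ : ℕ) : Layer (Q + 1) :=
  if ℓ = 0 then initLayer Q
  else if ℓ = 2 * Q + 1 then (1, 0)
  else if ℓ % 2 = 1 then flipLayer Q (Q - ℓ / 2)
  else shiftLayer Q (Q - ℓ / 2)

lemma bitLayer_odd {Q k : ℕ} (hk : k ≠ Q) : bitLayer Q (2 * k + 1) = flipLayer Q (Q - k) := by
  rw [bitLayer, if_neg (by omega), if_neg (by omega), if_pos (by omega),
    show (2 * k + 1) / 2 = k by omega]

lemma bitLayer_even (Q k : ℕ) :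
    bitLayer Q (2 * k + 2) = shiftLayer Q (Q - (k + 1)) := by
  rw [bitLayer, if_neg (by omega), if_neg (by omega), if_neg (by omega),
    show (2 * k + 2) / 2 = k + 1 by omega]

lemma bitLayer_last (Q : ℕ) : bitLayer Q (2 * Q + 1) = (1, 0) := by
  rw [bitLayer, if_neg (by omega), if_pos rfl]

lemma netEval_bitLayer_odd {Q x : ℕ} (hx : x < 2 ^ (Q + 1)) {k : ℕ} (hk : k ≤ Q) :
    netEval (2 * k + 1) (fun ℓ => (bitLayer Q ℓ).1) (fun ℓ => (bitLayer Q ℓ).2)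
        (fun j => if j = 0 then (x : ℝ) else 0) = stage Q x (Q - k) (bitProbe x (Q - k)) := by
  induction k with
  | zero => exact initLayer_apply hx
  | succ k ih =>
    obtain ⟨m, hm⟩ : ∃ m, Q - k = m + 1 := ⟨Q - (k + 1), by omega⟩
    rw [show 2 * (k + 1) + 1 = 2 * k + 1 + 1 + 1 by ring, netEval_succ_eq_apply,
      netEval_succ_eq_apply, ih (by omega), bitLayer_odd (by omega), bitLayer_even,
      flipLayer_apply, relu_one_sub_bitProbe, show Q - (k + 1) = m by omega, hm]
    exact shiftLayer_apply (by omega)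

end BinaryNet

end

/-- There is a feedforward ReLU network `f : ℝ → ℝ^{Q+1}` of depth `2Q+2` and
width at most `Q+1` computing, for every integer `x ∈ [0, 2^{Q+1})`, the vector
of binary digits `(x_0, …, x_Q)` of `x`.  The scalar input `x` is embedded as
the first coordinate of a width-`(Q+1)` state. -/
theorem exists_binary_decomposition_network (Q : ℕ) :
    ∃ (W : ℕ → Matrix (Fin (Q + 1)) (Fin (Q + 1)) ℝ) (b : ℕ → Fin (Q + 1) → ℝ),
      ∀ x : ℕ, x < 2 ^ (Q + 1) →
        ∀ q : Fin (Q + 1),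
          netEval (2 * Q + 2) W b
              (fun j => if j = 0 then (x : ℝ) else 0) q =
            if Nat.testBit x (q : ℕ) then 1 else 0 := by
  open BinaryNet in
  refine ⟨fun ℓ => (bitLayer Q ℓ).1, fun ℓ => (bitLayer Q ℓ).2, fun x hx q => ?_⟩
  rw [netEval_succ_eq_apply, netEval_bitLayer_odd hx le_rfl, bitLayer_last, Nat.sub_self,
    Layer.apply_one_zero (stage_nonneg (bitProbe_nonneg x 0)), stage_zero_bitProbe]
  rfl
end

section
/- Let B = {Z_1,...,Z_S} ⊂ {0,1}^{G×N} be an aperiodic binary dataset. Then there exists a 2-layer network F of the form F(X) = (1/S) Σ_{s=1}^S σ(W^s · X + C^s · 1), with each W^s a circular filter and each C^s a constant bias and σ the ReLU, of width at most SN, such that for all s = 1,...,S the first component F(Z_s)[0] is the maximum over all components: F(Z_s)[0] = max_{0 ≤ i ≤ N−1} F(Z_s)[i]. -/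
open Finset

/-- Lemma 4.3: for an aperiodic binary dataset `Z_1,…,Z_S ⊂ {0,1}^{G×N}` there
is a 2-layer network `F(X) = (1/S) Σ_s σ(W^s·X + C^s·1)` (each `W^s` a
circular filter with first row `W s`, so its row at index `K` is
`J ↦ W s (J − K)`; each `C^s` a constant bias; width `SN`) whose first output
component is maximal on every `Z_s`. -/
theorem exists_translation_estimator {G d : ℕ} {n : Fin d → ℕ}
    [NeZero G] [∀ i, NeZero (n i)] {S : ℕ}
    (Z : Fin S → (ZMod G × (∀ i, ZMod (n i))) → ℝ)
    (hbin : ∀ s I, Z s I = 0 ∨ Z s I = 1)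
    (hzero : ∀ s, Z s ≠ 0)
    (haper : ∀ (M : ZMod G × (∀ i, ZMod (n i))) (s t : Fin S),
      (fun I => Z s (I - M)) = Z t → M = 0 ∧ s = t) :
    ∃ (W : Fin S → (ZMod G × (∀ i, ZMod (n i))) → ℝ) (C : Fin S → ℝ),
      ∀ s : Fin S, ∀ K : ZMod G × (∀ i, ZMod (n i)),
        (1 / (S : ℝ)) * ∑ t, relu ((∑ J, W t (J - K) * Z s J) + C t) ≤
          (1 / (S : ℝ)) * ∑ t, relu ((∑ J, W t (J - 0) * Z s J) + C t) := by
  classical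
  have hz0 : ∀ s I, 0 ≤ Z s I := by
    intro s I; rcases hbin s I with h | h <;> rw [h] <;> norm_num
  have hz1 : ∀ s I, Z s I ≤ 1 := by
    intro s I; rcases hbin s I with h | h <;> rw [h] <;> norm_num
  set N : ℝ := (Fintype.card (ZMod G × (∀ i, ZMod (n i))) : ℝ) with hN
  have hNnn : (0:ℝ) ≤ N := by positivity
  refine ⟨fun t J => (N + 1) * Z t J - N, fun t => 1 - ∑ J, Z t J, ?_⟩
  intro s K
  dsimp only
  rcases eq_or_ne K 0 with rfl | hK
  · exact le_refl _
  have hSnn : (0:ℝ) ≤ 1 / (S : ℝ) := by positivity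
  apply mul_le_mul_of_nonneg_left _ hSnn
  have hRHS : (0:ℝ) ≤ ∑ t, relu ((∑ J, ((N + 1) * Z t (J - 0) - N) * Z s J)
      + (1 - ∑ J, Z t J)) :=
    Finset.sum_nonneg fun t _ => le_max_right _ _
  have hterm : ∀ t : Fin S,
      relu ((∑ J, ((N + 1) * Z t (J - K) - N) * Z s J) + (1 - ∑ J, Z t J)) = 0 := by
    intro t
    have hne : (fun I => Z t (I - K)) ≠ Z s := fun h => hK (haper K t s h).1
    obtain ⟨J0, hJ0⟩ : ∃ J0, Z t (J0 - K) ≠ Z s J0 := by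
      by_contra h; push_neg at h; exact hne (funext h)
    have hreindex : ∑ J, Z t (J - K) = ∑ J, Z t J :=
      Fintype.sum_equiv (Equiv.subRight K) _ _ (fun J => rfl)
    have hexpand : (∑ J, ((N + 1) * Z t (J - K) - N) * Z s J)
        = (N + 1) * (∑ J, Z t (J - K) * Z s J) - N * ∑ J, Z s J := by
      rw [Finset.mul_sum, Finset.mul_sum, ← Finset.sum_sub_distrib]
      exact Finset.sum_congr rfl fun J _ => by ring
    have hbnn : (0:ℝ) ≤ ∑ J, Z t J := Finset.sum_nonneg fun J _ => hz0 t _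
    have haN : (∑ J, Z s J) ≤ N := by
      rw [hN]
      calc (∑ J, Z s J) ≤ ∑ _J : ZMod G × (∀ i, ZMod (n i)), (1:ℝ) :=
            Finset.sum_le_sum fun J _ => hz1 s J
        _ = _ := by rw [Finset.sum_const, Finset.card_univ]; simp
    have hova : (∑ J, Z t (J - K) * Z s J) ≤ ∑ J, Z s J :=
      Finset.sum_le_sum fun J _ => by
        nlinarith [hz0 t (J - K), hz1 t (J - K), hz0 s J, hz1 s J]
    have key : (N + 1) * (∑ J, Z t (J - K) * Z s J) - N * (∑ J, Z s J)
        + (1 - ∑ J, Z t J) ≤ 0 := by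
      rcases hbin t (J0 - K) with h0 | h0
      · -- filter entry 0, data entry 1 : overlap ≤ a - 1
        have hs1 : Z s J0 = 1 := by
          rcases hbin s J0 with h1 | h1
          · exact absurd (h0.trans h1.symm) hJ0
          · exact h1
        have hova1 : (∑ J, Z t (J - K) * Z s J) ≤ (∑ J, Z s J) - 1 := by
          have e1 : (∑ J ∈ Finset.univ.erase J0, Z s J) + Z s J0 = ∑ J, Z s J :=
            Finset.sum_erase_add _ _ (Finset.mem_univ J0)
          have e2 : (∑ J ∈ Finset.univ.erase J0, Z t (J - K) * Z s J)
              + Z t (J0 - K) * Z s J0 = ∑ J, Z t (J - K) * Z s J :=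
            Finset.sum_erase_add _ _ (Finset.mem_univ J0)
          rw [h0, hs1, zero_mul, add_zero] at e2
          have cmp : (∑ J ∈ Finset.univ.erase J0, Z t (J - K) * Z s J)
              ≤ ∑ J ∈ Finset.univ.erase J0, Z s J := Finset.sum_le_sum fun J _ => by
            nlinarith [hz0 t (J - K), hz1 t (J - K), hz0 s J, hz1 s J]
          linarith
        nlinarith
      · -- filter entry 1, data entry 0 : b ≥ overlap + 1
        have hs0 : Z s J0 = 0 := by
          rcases hbin s J0 with h1 | h1
          · exact h1
          · exact absurd (h0.trans h1.symm) hJ0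
        have hbov : (∑ J, Z t (J - K) * Z s J) + 1 ≤ ∑ J, Z t J := by
          rw [← hreindex]
          have e1 : (∑ J ∈ Finset.univ.erase J0, Z t (J - K)) + Z t (J0 - K)
              = ∑ J, Z t (J - K) := Finset.sum_erase_add _ _ (Finset.mem_univ J0)
          have e2 : (∑ J ∈ Finset.univ.erase J0, Z t (J - K) * Z s J)
              + Z t (J0 - K) * Z s J0 = ∑ J, Z t (J - K) * Z s J :=
            Finset.sum_erase_add _ _ (Finset.mem_univ J0)
          rw [h0, hs0, mul_zero, add_zero] at e2
          rw [h0] at e1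
          have cmp : (∑ J ∈ Finset.univ.erase J0, Z t (J - K) * Z s J)
              ≤ ∑ J ∈ Finset.univ.erase J0, Z t (J - K) := Finset.sum_le_sum fun J _ => by
            nlinarith [hz0 t (J - K), hz1 t (J - K), hz0 s J, hz1 s J]
          linarith
        nlinarith
    rw [hexpand]
    unfold relu
    rw [max_eq_right (by linarith)]
  calc (∑ t, relu ((∑ J, ((N + 1) * Z t (J - K) - N) * Z s J) + (1 - ∑ J, Z t J)))
      = ∑ _t : Fin S, (0:ℝ) := Finset.sum_congr rfl fun t _ => hterm t
    _ = 0 := by simp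
    _ ≤ _ := hRHS
end
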